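/- The weighted median proxy voting rule is strategyproof with respect to followers' positions: no follower can, by misreporting their position (equivalently, delegating to a proxy other than the nearest one), cause the weighted median outcome to move strictly closer to their true peak. -/

import Mathlib

/-- `x` is a median of the multiset `P`. -/
def IsMedian (P : Multiset ℝ) (x : ℝ) : Prop :=
  x ∈ P ∧ 2 * (P.filter (fun y => y < x)).card ≤ P.card ∧
    2 * (P.filter (fun y => x < y)).card ≤ P.card

/-- The combined multiset of positions of proxies and followers. -/
def combined {m n : ℕ} (s : Fin m → ℝ) (p : Fin n → ℝ) : Multiset ℝ :=
  Finset.univ.val.map s + Finset.univ.val.map p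

/-- Updating one follower's position changes the combined multiset by
replacing one element. -/
lemma combined_update {m n : ℕ} (s : Fin m → ℝ) (pN : Fin n → ℝ) (i : Fin n) (x : ℝ) :
    combined s (Function.update pN i x) + {pN i} = combined s pN + {x} := by
  unfold combined
  have huniv : (Finset.univ : Finset (Fin n)).val
      = i ::ₘ ((Finset.univ : Finset (Fin n)).erase i).val := by
    conv_lhs => rw [← Finset.insert_erase (Finset.mem_univ i)]
    rw [Finset.insert_val_of_notMem (Finset.notMem_erase i _)]
  have hmapeq : (((Finset.univ : Finset (Fin n)).erase i).val.map
      (Function.update pN i x)) = ((Finset.univ : Finset (Fin n)).erase i).val.map pN := by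
    apply Multiset.map_congr rfl
    intro j hj
    have : j ≠ i := (Finset.mem_erase.1 (Finset.mem_def.2 hj)).1
    exact Function.update_of_ne this _ _
  rw [huniv, Multiset.map_cons, Multiset.map_cons, hmapeq, Function.update_self]
  have hx : ∀ (c : ℝ) (M : Multiset ℝ), (c ::ₘ M) = M + {c} := by
    intro c M
    rw [← Multiset.singleton_add, add_comm]
  rw [hx x, hx (pN i)]
  ac_rfl

lemma card_combined {m n : ℕ} (s : Fin m → ℝ) (p : Fin n → ℝ) :
    (combined s p).card = m + n := by
  simp [combined]

/-- Relation between filtered cardinalities under a one-element replacement. -/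
lemma filter_card_rel {P P' : Multiset ℝ} {p x : ℝ} (hP : P' + {p} = P + {x})
    (q : ℝ → Prop) [DecidablePred q] :
    (P'.filter q).card + (if q p then 1 else 0)
      = (P.filter q).card + (if q x then 1 else 0) := by
  have := congrArg (fun M => (M.filter q).card) hP
  simpa [Multiset.filter_add, Multiset.filter_singleton, apply_ite Multiset.card] using this

/-- If the manipulator's true peak is below the median, the new median cannot
move below the old median. -/
lemma median_mono_left {P P' : Multiset ℝ} {p x μ μ' : ℝ}
    (hP : P' + {p} = P + {x}) (hodd : Odd P.card)
    (hμ : IsMedian P μ) (hμ' : IsMedian P' μ') (hp : p < μ) : μ ≤ μ' := by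
  by_contra h
  push_neg at h
  have hcard : P'.card = P.card := by
    have := congrArg Multiset.card hP
    simpa using this
  have h1 : 2 * (P.filter (fun y => y < μ)).card ≤ P.card := hμ.2.1
  obtain ⟨k, hk⟩ := hodd
  have hsplit : (P.filter (fun y => y < μ)).card
      + (P.filter (fun y => ¬ y < μ)).card = P.card := by
    rw [← Multiset.card_add, Multiset.filter_add_not]
  have hrel := filter_card_rel hP (fun y => ¬ y < μ)
  rw [if_neg (by simp [hp])] at hrel
  have hmono : (P'.filter (fun y => ¬ y < μ)).card ≤ (P'.filter (fun y => μ' < y)).card :=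
    Multiset.card_le_card (Multiset.monotone_filter_right _
      (fun y hy => lt_of_lt_of_le h (not_lt.1 hy)))
  have h2 := hμ'.2.2
  split_ifs at hrel <;> omega

/-- If the manipulator's true peak is above the median, the new median cannot
move above the old median. -/
lemma median_mono_right {P P' : Multiset ℝ} {p x μ μ' : ℝ}
    (hP : P' + {p} = P + {x}) (hodd : Odd P.card)
    (hμ : IsMedian P μ) (hμ' : IsMedian P' μ') (hp : μ < p) : μ' ≤ μ := by
  by_contra h
  push_neg at h
  have hcard : P'.card = P.card := by
    have := congrArg Multiset.card hP
    simpa using this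
  have h1 : 2 * (P.filter (fun y => μ < y)).card ≤ P.card := hμ.2.2
  obtain ⟨k, hk⟩ := hodd
  have hsplit : (P.filter (fun y => μ < y)).card
      + (P.filter (fun y => ¬ μ < y)).card = P.card := by
    rw [← Multiset.card_add, Multiset.filter_add_not]
  have hrel := filter_card_rel hP (fun y => ¬ μ < y)
  rw [if_neg (by simp [hp])] at hrel
  have hmono : (P'.filter (fun y => ¬ μ < y)).card ≤ (P'.filter (fun y => y < μ')).card :=
    Multiset.card_le_card (Multiset.monotone_filter_right _
      (fun y hy => lt_of_le_of_lt (not_lt.1 hy) h))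
  have h2 := hμ'.2.1
  split_ifs at hrel <;> omega

/-- Geometric lemma: if `p ≤ μ ≤ μ'`, `a` is strictly closer to `μ` than `b`,
and `b` is strictly closer to `μ'` than `a`, then `a` is strictly closer to `p`. -/
lemma geomL {p μ μ' a b : ℝ} (hpμ : p ≤ μ) (hμμ' : μ ≤ μ')
    (h0 : |a - μ| < |b - μ|) (h1 : |b - μ'| < |a - μ'|) : |a - p| < |b - p| := by
  have H0 : (a - μ) ^ 2 < (b - μ) ^ 2 := sq_lt_sq.2 (by simpa [abs_abs] using h0)
  have H1 : (b - μ') ^ 2 < (a - μ') ^ 2 := sq_lt_sq.2 (by simpa [abs_abs] using h1)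
  have G : (a - p) ^ 2 < (b - p) ^ 2 := by
    rcases lt_trichotomy a b with hab | hab | hab
    · nlinarith
    · exfalso; rw [hab] at H0; exact lt_irrefl _ H0
    · exfalso; nlinarith
  have := sq_lt_sq.1 G
  simpa [abs_abs] using this

lemma geomR {p μ μ' a b : ℝ} (hpμ : μ ≤ p) (hμμ' : μ' ≤ μ)
    (h0 : |a - μ| < |b - μ|) (h1 : |b - μ'| < |a - μ'|) : |a - p| < |b - p| := by
  have h0' : |(-a) - (-μ)| < |(-b) - (-μ)| := by
    rw [show (-a) - (-μ) = -(a - μ) by ring, show (-b) - (-μ) = -(b - μ) by ring,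
      abs_neg, abs_neg]; exact h0
  have h1' : |(-b) - (-μ')| < |(-a) - (-μ')| := by
    rw [show (-a) - (-μ') = -(a - μ') by ring, show (-b) - (-μ') = -(b - μ') by ring,
      abs_neg, abs_neg]; exact h1
  have := geomL (p := -p) (μ := -μ) (μ' := -μ') (a := -a) (b := -b)
    (by linarith) (by linarith) h0' h1'
  rw [show (-a) - (-p) = -(a - p) by ring, show (-b) - (-p) = -(b - p) by ring,
    abs_neg, abs_neg] at this
  exact this

/-- The weighted median proxy rule (whose outcome is the proxy position closest to
the unweighted median of all voters) is strategyproof with respect to followers'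
positions: no follower can move the outcome strictly closer to their true peak
by misreporting. -/
theorem weighted_median_strategyproof_for_followers {m n : ℕ} (hodd : Odd (m + n))
    (s : Fin m → ℝ) (pN : Fin n → ℝ) (i : Fin n) (x : ℝ) (μ μ' : ℝ)
    (hμ : IsMedian (combined s pN) μ)
    (hμ' : IsMedian (combined s (Function.update pN i x)) μ')
    (j0 j1 : Fin m)
    (hj0 : ∀ k ≠ j0, |s j0 - μ| < |s k - μ|)
    (hj1 : ∀ k ≠ j1, |s j1 - μ'| < |s k - μ'|) :
    ¬ |s j1 - pN i| < |s j0 - pN i| := by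
  by_cases hj : j1 = j0
  · subst hj; exact lt_irrefl _
  · have h0 : |s j0 - μ| < |s j1 - μ| := hj0 j1 hj
    have h1 : |s j1 - μ'| < |s j0 - μ'| := hj1 j0 (fun h => hj h.symm)
    have hP : combined s (Function.update pN i x) + {pN i} = combined s pN + {x} :=
      combined_update s pN i x
    have hoddP : Odd (combined s pN).card := by rw [card_combined]; exact hodd
    rcases lt_trichotomy (pN i) μ with h | h | h
    · have hμle : μ ≤ μ' := median_mono_left hP hoddP hμ hμ' h
      exact not_lt.2 (le_of_lt (geomL (le_of_lt h) hμle h0 h1))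
    · rw [← h] at h0
      exact not_lt.2 (le_of_lt h0)
    · have hμle : μ' ≤ μ := median_mono_right hP hoddP hμ hμ' h
      exact not_lt.2 (le_of_lt (geomR (le_of_lt h) hμle h0 h1))
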